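/- Let 0 < ε₀ ≤ κ ≤ 1 and let f : [0,∞) → ℝ be bounded and continuous with f(0) = 0, twice continuously differentiable on (0,∞), with f' ≥ 0 and f'' ≤ 0 on (0,2]. Define J(r) := inf_{x,y ∈ ℝ^d, |x−y| = r} μ_{x,y,x−y}(ℝ^d). Then for all x, y ∈ ℝ^d with 0 < |x−y| ≤ ε₀, with h_f(x,y) := f(|x−y|), one has L̃_C h_f(x,y) ≤ (1/2) J(|x−y|) ( f(2|x−y|) − 2 f(|x−y|) ). -/

import Mathlib

open MeasureTheory Set
open scoped ENNReal RealInnerProductSpace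

noncomputable section

/-- `ℝ^d` as a Euclidean space. -/
abbrev Ed (d : ℕ) := EuclideanSpace ℝ (Fin d)

/-- A Lévy measure on `ℝ^d`. -/
def IsLevyMeasure {d : ℕ} (ν : Measure (Ed d)) : Prop :=
  ν {0} = 0 ∧ ∫⁻ z, ENNReal.ofReal (min 1 (‖z‖ ^ 2)) ∂ν < ⊤

/-- `ν_u := ν ∧ (δ_u ∗ ν)`. -/
def nuShift {d : ℕ} (ν : Measure (Ed d)) (u : Ed d) : Measure (Ed d) :=
  ν ⊓ ν.map (fun w => w + u)

/-- `c(x,y,u,z) = min(c(x,z), c(y,z), c(x,z−u), c(y,z−u))`. -/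
def cmin {d : ℕ} (c : Ed d → Ed d → ℝ) (x y u z : Ed d) : ℝ :=
  min (min (c x z) (c y z)) (min (c x (z - u)) (c y (z - u)))

/-- `μ_{x,y,u}(dz) = c(x,y,u,z) ν_u(dz)`. -/
def muXYU {d : ℕ} (ν : Measure (Ed d)) (c : Ed d → Ed d → ℝ) (x y u : Ed d) :
    Measure (Ed d) :=
  (nuShift ν u).withDensity (fun z => ENNReal.ofReal (cmin c x y u z))

/-- `ν̃_{x,y}(dz) = min(c(x,z), c(y,z)) ν(dz)`. -/
def nuTilde {d : ℕ} (ν : Measure (Ed d)) (c : Ed d → Ed d → ℝ) (x y : Ed d) :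
    Measure (Ed d) :=
  ν.withDensity (fun z => ENNReal.ofReal (min (c x z) (c y z)))

/-- `c̃(x,y,z) = c(x,z) − min(c(x,z), c(y,z))`. -/
def ctilde {d : ℕ} (c : Ed d → Ed d → ℝ) (x y z : Ed d) : ℝ :=
  c x z - min (c x z) (c y z)

/-- `(x−y)_κ = min(1, κ/|x−y|) (x−y)`. -/
def kap {d : ℕ} (κ : ℝ) (v : Ed d) : Ed d := (min 1 (κ / ‖v‖)) • v


/-- The operator `L̃_C` (the first three integrals of the coupling operator `L̃`)
applied to `h_f(x,y) = f(|x−y|)`, whose gradients are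
`∇_x h_f(x,y) = f'(|x−y|)(x−y)/|x−y| = −∇_y h_f(x,y)`. -/
def LCdist {d : ℕ} (ν : Measure (Ed d)) (c : Ed d → Ed d → ℝ) (κ : ℝ)
    (f : ℝ → ℝ) (x y : Ed d) : ℝ :=
  (1 / 2) * ∫ z, (f ‖x + z - (y + z + kap κ (x - y))‖ - f ‖x - y‖
      - (if ‖z‖ ≤ 1 then (deriv f ‖x - y‖ / ‖x - y‖) * ⟪x - y, z⟫ else 0)
      - (if ‖z + kap κ (x - y)‖ ≤ 1 then
          -((deriv f ‖x - y‖ / ‖x - y‖) * ⟪x - y, z + kap κ (x - y)⟫) else 0))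
      ∂(muXYU ν c x y (kap κ (y - x)))
  + (1 / 2) * ∫ z, (f ‖x + z - (y + z + kap κ (y - x))‖ - f ‖x - y‖
      - (if ‖z‖ ≤ 1 then (deriv f ‖x - y‖ / ‖x - y‖) * ⟪x - y, z⟫ else 0)
      - (if ‖z + kap κ (y - x)‖ ≤ 1 then
          -((deriv f ‖x - y‖ / ‖x - y‖) * ⟪x - y, z + kap κ (y - x)⟫) else 0))
      ∂(muXYU ν c x y (kap κ (x - y)))
  + (∫ z, (f ‖x + z - (y + z)‖ - f ‖x - y‖
      - (if ‖z‖ ≤ 1 then (deriv f ‖x - y‖ / ‖x - y‖) * ⟪x - y, z⟫ else 0)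
      - (if ‖z‖ ≤ 1 then -((deriv f ‖x - y‖ / ‖x - y‖) * ⟪x - y, z⟫) else 0))
      ∂(nuTilde ν c x y - (2⁻¹ : ℝ≥0∞) • muXYU ν c x y (kap κ (x - y))
          - (2⁻¹ : ℝ≥0∞) • muXYU ν c x y (kap κ (y - x))))

/-- The operator `L̃_R` (the last two integrals of the coupling operator `L̃`)
applied to `h_f(x,y) = f(|x−y|)`. -/
def LRdist {d : ℕ} (ν : Measure (Ed d)) (c : Ed d → Ed d → ℝ)
    (f : ℝ → ℝ) (x y : Ed d) : ℝ :=
  (∫ z, (f ‖x + z - y‖ - f ‖x - y‖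
      - (if ‖z‖ ≤ 1 then (deriv f ‖x - y‖ / ‖x - y‖) * ⟪x - y, z⟫ else 0))
      * ctilde c x y z ∂ν)
  + (∫ z, (f ‖x - (y + z)‖ - f ‖x - y‖
      - (if ‖z‖ ≤ 1 then -((deriv f ‖x - y‖ / ‖x - y‖) * ⟪x - y, z⟫) else 0))
      * ctilde c y x z ∂ν)

/-- `J(r) := inf_{x,y : |x−y| = r} μ_{x,y,x−y}(ℝ^d)`. -/
def Jfun (d : ℕ) (ν : Measure (Ed d)) (c : Ed d → Ed d → ℝ) (r : ℝ) : ℝ :=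
  sInf {m : ℝ | ∃ x y : Ed d, ‖x - y‖ = r ∧ m = (muXYU ν c x y (x - y) Set.univ).toReal}



section S7Aux

lemma s7_map_inf_equiv {α β : Type*} [MeasurableSpace α] [MeasurableSpace β]
    (e : α ≃ᵐ β) (μ μ' : Measure α) :
    (μ ⊓ μ').map e = μ.map e ⊓ μ'.map e := by
  ext s hs
  rw [e.map_apply, Measure.inf_apply (e.measurable hs), Measure.inf_apply hs]
  congr 1
  ext m
  constructor
  · rintro ⟨t, rfl⟩
    refine ⟨e.symm ⁻¹' t, ?_⟩
    have h1 : e ⁻¹' (e.symm ⁻¹' t ∩ s) = t ∩ e ⁻¹' s := by ext z; simp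
    have h2 : e ⁻¹' ((e.symm ⁻¹' t)ᶜ ∩ s) = tᶜ ∩ e ⁻¹' s := by ext z; simp
    rw [e.map_apply, e.map_apply, h1, h2]
  · rintro ⟨t, rfl⟩
    refine ⟨e ⁻¹' t, ?_⟩
    have h1 : e ⁻¹' (t ∩ s) = e ⁻¹' t ∩ e ⁻¹' s := by ext z; simp
    have h2 : e ⁻¹' (tᶜ ∩ s) = (e ⁻¹' t)ᶜ ∩ e ⁻¹' s := by ext z; simp
    rw [e.map_apply, e.map_apply, h1, h2]

lemma s7_map_withDensity_equiv {α β : Type*} [MeasurableSpace α] [MeasurableSpace β]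
    (e : α ≃ᵐ β) (μ : Measure α) {g : β → ℝ≥0∞} (hg : Measurable g) :
    (μ.withDensity (fun z => g (e z))).map e = (μ.map e).withDensity g := by
  ext s hs
  rw [e.map_apply, withDensity_apply _ (e.measurable hs), withDensity_apply _ hs,
    setLIntegral_map hs hg e.measurable]

/-- Tails of a Lévy-type measure are finite. -/
lemma s7_tail_finite {d : ℕ} (ν : Measure (Ed d))
    (hν : ∫⁻ z, ENNReal.ofReal (min 1 (‖z‖ ^ 2)) ∂ν < ⊤) {ε : ℝ} (hε : 0 < ε) :
    ν {z | ε ≤ ‖z‖} < ⊤ := by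
  set C : ℝ≥0∞ := ENNReal.ofReal (min 1 (ε ^ 2)) with hC
  have hmin : (0:ℝ) < min 1 (ε ^ 2) := by positivity
  have hC0 : C ≠ 0 := by
    simp only [hC, ne_eq, ENNReal.ofReal_eq_zero, not_le]; exact hmin
  have hmeas : AEMeasurable (fun z : Ed d => ENNReal.ofReal (min 1 (‖z‖ ^ 2))) ν :=
    (ENNReal.measurable_ofReal.comp
      (measurable_const.min ((measurable_norm).pow_const 2))).aemeasurable
  have hsub : {z : Ed d | ε ≤ ‖z‖} ⊆ {z | C ≤ ENNReal.ofReal (min 1 (‖z‖ ^ 2))} := by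
    intro z hz
    simp only [Set.mem_setOf_eq] at hz ⊢
    exact ENNReal.ofReal_le_ofReal (min_le_min le_rfl (by nlinarith))
  calc ν {z | ε ≤ ‖z‖} ≤ ν {z | C ≤ ENNReal.ofReal (min 1 (‖z‖ ^ 2))} := measure_mono hsub
    _ ≤ (∫⁻ z, ENNReal.ofReal (min 1 (‖z‖ ^ 2)) ∂ν) / C :=
        meas_ge_le_lintegral_div hmeas hC0 (by simp [hC])
    _ < ⊤ := ENNReal.div_lt_top hν.ne hC0

/-- `ν_u` is a finite measure when `u ≠ 0`. -/
lemma s7_nuShift_finite {d : ℕ} (ν : Measure (Ed d))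
    (hν : ∫⁻ z, ENNReal.ofReal (min 1 (‖z‖ ^ 2)) ∂ν < ⊤) {u : Ed d} (hu : u ≠ 0) :
    nuShift ν u Set.univ < ⊤ := by
  have hu0 : 0 < ‖u‖ := norm_pos_iff.2 hu
  have hε : 0 < ‖u‖ / 2 := by positivity
  have htail := s7_tail_finite ν hν hε
  have hBmeas : MeasurableSet {z : Ed d | ‖z‖ < ‖u‖ / 2} :=
    measurableSet_lt measurable_norm measurable_const
  have hc1 : nuShift ν u {z : Ed d | ‖z‖ < ‖u‖ / 2} ≤ ν {z : Ed d | ‖u‖ / 2 ≤ ‖z‖} := by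
    refine le_trans (Measure.le_iff'.1 inf_le_right _) ?_
    rw [Measure.map_apply (measurable_add_const u) hBmeas]
    refine measure_mono fun w hw => ?_
    simp only [Set.mem_preimage, Set.mem_setOf_eq] at hw ⊢
    have h1 : ‖(w + u) - w‖ ≤ ‖w + u‖ + ‖w‖ := norm_sub_le _ _
    have h2 : (w + u) - w = u := by abel
    rw [h2] at h1
    linarith
  have hc2 : nuShift ν u {z : Ed d | ‖z‖ < ‖u‖ / 2}ᶜ ≤ ν {z : Ed d | ‖u‖ / 2 ≤ ‖z‖} := by
    refine le_trans (Measure.le_iff'.1 inf_le_left _) (measure_mono fun w hw => ?_)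
    simpa [not_lt] using hw
  calc nuShift ν u Set.univ
      ≤ nuShift ν u {z : Ed d | ‖z‖ < ‖u‖ / 2}
        + nuShift ν u {z : Ed d | ‖z‖ < ‖u‖ / 2}ᶜ := by
        conv_lhs => rw [← Set.union_compl_self {z : Ed d | ‖z‖ < ‖u‖ / 2}]
        exact measure_union_le _ _
    _ ≤ ν {z : Ed d | ‖u‖ / 2 ≤ ‖z‖} + ν {z : Ed d | ‖u‖ / 2 ≤ ‖z‖} := add_le_add hc1 hc2
    _ < ⊤ := ENNReal.add_lt_top.2 ⟨htail, htail⟩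

/-- The compensated drift integrand. -/
def Paux {d : ℕ} (g : ℝ) (v z : Ed d) : ℝ := if ‖z‖ ≤ 1 then g * ⟪v, z⟫ else 0

lemma Paux_meas {d : ℕ} (g : ℝ) (v : Ed d) : Measurable (Paux g v) := by
  refine Measurable.ite (measurableSet_le measurable_norm measurable_const) ?_ measurable_const
  exact (continuous_const.mul (continuous_const.inner continuous_id)).measurable

lemma Paux_bound {d : ℕ} (g : ℝ) (v z : Ed d) : |Paux g v z| ≤ |g| * ‖v‖ := by
  unfold Paux
  by_cases h : ‖z‖ ≤ 1
  · rw [if_pos h, abs_mul]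
    have h1 : |⟪v, z⟫| ≤ ‖v‖ * ‖z‖ := abs_real_inner_le_norm v z
    have h2 : (0:ℝ) ≤ ‖z‖ := norm_nonneg z
    have h3 : (0:ℝ) ≤ ‖v‖ := norm_nonneg v
    have h4 : (0:ℝ) ≤ |g| := abs_nonneg g
    calc |g| * |⟪v, z⟫| ≤ |g| * (‖v‖ * ‖z‖) := mul_le_mul_of_nonneg_left h1 h4
      _ ≤ |g| * (‖v‖ * 1) :=
          mul_le_mul_of_nonneg_left (mul_le_mul_of_nonneg_left h h3) h4
      _ = |g| * ‖v‖ := by ring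
  · rw [if_neg h]
    simp
    positivity

lemma Paux_integrable_comp {d : ℕ} (g : ℝ) (v : Ed d) {T : Ed d → Ed d} (hT : Measurable T)
    (μ : Measure (Ed d)) [IsFiniteMeasure μ] :
    Integrable (fun z => Paux g v (T z)) μ := by
  refine Integrable.mono' (integrable_const (|g| * ‖v‖))
    (((Paux_meas g v).comp hT).aestronglyMeasurable) (ae_of_all _ fun z => ?_)
  rw [Real.norm_eq_abs]
  exact Paux_bound g v (T z)

lemma Paux_integrable {d : ℕ} (g : ℝ) (v : Ed d)
    (μ : Measure (Ed d)) [IsFiniteMeasure μ] :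
    Integrable (Paux g v) μ :=
  Paux_integrable_comp g v measurable_id μ

end S7Aux

/-- for `0 < ε₀ ≤ κ ≤ 1` and `f` bounded continuous with `f(0) = 0`,
`C²` on `(0,∞)` with `f' ≥ 0`, `f'' ≤ 0` on `(0,2]`, one has, for `0 < |x−y| ≤ ε₀`,
`L̃_C h_f(x,y) ≤ (1/2) J(|x−y|) (f(2|x−y|) − 2f(|x−y|))`. -/
theorem statement7 {d : ℕ} (hd : 1 ≤ d) (ν : Measure (Ed d)) (hν : IsLevyMeasure ν)
    (c : Ed d → Ed d → ℝ) (cLo cUp : ℝ) (hcLo : 0 < cLo) (hcUp : cLo ≤ cUp)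
    (hc_cont : Continuous (fun p : Ed d × Ed d => c p.1 p.2))
    (hc_bound : ∀ x z, cLo ≤ c x z ∧ c x z ≤ cUp)
    (ε₀ κ : ℝ) (hε₀ : 0 < ε₀) (hε₀κ : ε₀ ≤ κ) (hκ1 : κ ≤ 1)
    (f : ℝ → ℝ) (Mf : ℝ)
    (hf_bdd : ∀ r : ℝ, 0 ≤ r → |f r| ≤ Mf)
    (hf_cont : ContinuousOn f (Set.Ici 0))
    (hf0 : f 0 = 0)
    (hf_smooth : ContDiffOn ℝ 2 f (Set.Ioi 0))
    (hf' : ∀ r : ℝ, 0 < r → r ≤ 2 → 0 ≤ deriv f r)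
    (hf'' : ∀ r : ℝ, 0 < r → r ≤ 2 → deriv (deriv f) r ≤ 0)
    (x y : Ed d) (hxy : 0 < ‖x - y‖) (hxy' : ‖x - y‖ ≤ ε₀) :
    LCdist ν c κ f x y
      ≤ (1 / 2) * Jfun d ν c ‖x - y‖ * (f (2 * ‖x - y‖) - 2 * f ‖x - y‖) := by
  classical
  have hr1 : ‖x - y‖ ≤ 1 := hxy'.trans (hε₀κ.trans hκ1)
  have hκr : (1 : ℝ) ≤ κ / ‖x - y‖ := by
    rw [le_div_iff₀ hxy]
    linarith [hxy'.trans hε₀κ]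
  have hkap1 : kap κ (x - y) = x - y := by
    unfold kap; rw [min_eq_left hκr, one_smul]
  have hkap2 : kap κ (y - x) = y - x := by
    unfold kap; rw [norm_sub_rev, min_eq_left hκr, one_smul]
  have hu1 : (x - y : Ed d) ≠ 0 := norm_pos_iff.1 hxy
  have hu2 : (y - x : Ed d) ≠ 0 := sub_ne_zero.2 (Ne.symm (sub_ne_zero.1 hu1))
  -- measurability of the densities
  have hcont1 : ∀ w : Ed d, Continuous fun z : Ed d => c w z := fun w =>
    hc_cont.comp (Continuous.prodMk_right w)
  have hcmeas : ∀ u : Ed d, Measurable fun z : Ed d => ENNReal.ofReal (cmin c x y u z) := by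
    intro u
    apply ENNReal.measurable_ofReal.comp
    have hsubc : Continuous fun z : Ed d => z - u := continuous_id.sub continuous_const
    exact (((hcont1 x).min (hcont1 y)).min
      (((hcont1 x).comp hsubc).min ((hcont1 y).comp hsubc))).measurable
  -- the translation z ↦ z + (x - y)
  let e : Ed d ≃ᵐ Ed d := (Homeomorph.addRight (x - y)).toMeasurableEquiv
  have hmap : (muXYU ν c x y (y - x)).map e = muXYU ν c x y (x - y) := by
    have hdens : (fun z : Ed d => ENNReal.ofReal (cmin c x y (y - x) z))
        = fun z : Ed d => ENNReal.ofReal (cmin c x y (x - y) (e z)) := by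
      funext z
      show ENNReal.ofReal (cmin c x y (y - x) z)
        = ENNReal.ofReal (cmin c x y (x - y) (z + (x - y)))
      unfold cmin
      rw [show z - (y - x) = z + (x - y) by abel,
        show z + (x - y) - (x - y) = z by abel, min_comm]
    unfold muXYU
    rw [hdens, s7_map_withDensity_equiv e _ (hcmeas (x - y))]
    congr 1
    unfold nuShift
    rw [s7_map_inf_equiv]
    have h1 : ν.map e = ν.map (fun w : Ed d => w + (x - y)) := rfl
    have h2 : (ν.map (fun w : Ed d => w + (y - x))).map e = ν := by
      rw [Measure.map_map e.measurable (measurable_add_const _)]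
      have h3 : (⇑e ∘ fun w : Ed d => w + (y - x)) = id := by
        funext w
        show (w + (y - x)) + (x - y) = w
        abel
      rw [h3, Measure.map_id]
    rw [h1, h2, inf_comm]
  have hmap2 : (muXYU ν c x y (x - y)).map e.symm = muXYU ν c x y (y - x) := by
    rw [← hmap, Measure.map_map e.symm.measurable e.measurable]
    have h3 : (⇑e.symm ∘ ⇑e) = id := by
      funext w; exact e.symm_apply_apply w
    rw [h3, Measure.map_id]
  -- finiteness
  have hμfin : ∀ u : Ed d, u ≠ 0 → muXYU ν c x y u Set.univ < ⊤ := by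
    intro u hu
    have hcmin_le : ∀ z : Ed d, cmin c x y u z ≤ cUp := fun z =>
      le_trans (min_le_left _ _) (le_trans (min_le_left _ _) (hc_bound x z).2)
    have h1 : muXYU ν c x y u Set.univ
        = ∫⁻ z, ENNReal.ofReal (cmin c x y u z) ∂(nuShift ν u) := by
      unfold muXYU
      rw [withDensity_apply _ MeasurableSet.univ, Measure.restrict_univ]
    rw [h1]
    calc ∫⁻ z, ENNReal.ofReal (cmin c x y u z) ∂(nuShift ν u)
        ≤ ∫⁻ _, ENNReal.ofReal cUp ∂(nuShift ν u) :=
          lintegral_mono fun z => ENNReal.ofReal_le_ofReal (hcmin_le z)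
      _ = ENNReal.ofReal cUp * nuShift ν u Set.univ := lintegral_const _
      _ < ⊤ := ENNReal.mul_lt_top ENNReal.ofReal_lt_top (s7_nuShift_finite ν hν.2 hu)
  haveI i1 : IsFiniteMeasure (muXYU ν c x y (y - x)) := ⟨hμfin _ hu2⟩
  haveI i2 : IsFiniteMeasure (muXYU ν c x y (x - y)) := ⟨hμfin _ hu1⟩
  have hMeq : muXYU ν c x y (y - x) Set.univ = muXYU ν c x y (x - y) Set.univ := by
    conv_rhs => rw [← hmap]
    rw [e.map_apply, Set.preimage_univ]
  -- change of variables for the compensator terms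
  have hcov1 : (∫ z, Paux (deriv f ‖x - y‖ / ‖x - y‖) (x - y) (z + (x - y))
        ∂(muXYU ν c x y (y - x)))
      = ∫ z, Paux (deriv f ‖x - y‖ / ‖x - y‖) (x - y) z ∂(muXYU ν c x y (x - y)) := by
    rw [← hmap, integral_map_equiv]
    rfl
  have hcov2 : (∫ z, Paux (deriv f ‖x - y‖ / ‖x - y‖) (x - y) (z - (x - y))
        ∂(muXYU ν c x y (x - y)))
      = ∫ z, Paux (deriv f ‖x - y‖ / ‖x - y‖) (x - y) z ∂(muXYU ν c x y (y - x)) := by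
    rw [← hmap2, integral_map_equiv]
    rfl
  -- the three integrals
  have hI1 : (∫ z, (f ‖x + z - (y + z + kap κ (x - y))‖ - f ‖x - y‖
      - (if ‖z‖ ≤ 1 then (deriv f ‖x - y‖ / ‖x - y‖) * ⟪x - y, z⟫ else 0)
      - (if ‖z + kap κ (x - y)‖ ≤ 1 then
          -((deriv f ‖x - y‖ / ‖x - y‖) * ⟪x - y, z + kap κ (x - y)⟫) else 0))
      ∂(muXYU ν c x y (kap κ (y - x))))
      = -(f ‖x - y‖) * ((muXYU ν c x y (x - y)) Set.univ).toReal
        - (∫ z, Paux (deriv f ‖x - y‖ / ‖x - y‖) (x - y) z ∂(muXYU ν c x y (y - x)))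
        + (∫ z, Paux (deriv f ‖x - y‖ / ‖x - y‖) (x - y) z ∂(muXYU ν c x y (x - y))) := by
    simp only [hkap1, hkap2]
    have hfn : (fun z : Ed d => f ‖x + z - (y + z + (x - y))‖ - f ‖x - y‖
        - (if ‖z‖ ≤ 1 then (deriv f ‖x - y‖ / ‖x - y‖) * ⟪x - y, z⟫ else 0)
        - (if ‖z + (x - y)‖ ≤ 1 then
            -((deriv f ‖x - y‖ / ‖x - y‖) * ⟪x - y, z + (x - y)⟫) else 0))
        = fun z : Ed d => (-(f ‖x - y‖) - Paux (deriv f ‖x - y‖ / ‖x - y‖) (x - y) z)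
            + Paux (deriv f ‖x - y‖ / ‖x - y‖) (x - y) (z + (x - y)) := by
      funext z
      have h0 : x + z - (y + z + (x - y)) = (0 : Ed d) := by abel
      rw [h0, norm_zero, hf0]
      by_cases h1 : ‖z‖ ≤ 1 <;> by_cases h2 : ‖z + (x - y)‖ ≤ 1 <;>
        simp [Paux, h1, h2] <;> ring
    have hint1 : Integrable (fun z : Ed d =>
        -(f ‖x - y‖) - Paux (deriv f ‖x - y‖ / ‖x - y‖) (x - y) z)
        (muXYU ν c x y (y - x)) :=
      (integrable_const _).sub (Paux_integrable _ _ _)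
    have hint2 : Integrable (fun z : Ed d =>
        Paux (deriv f ‖x - y‖ / ‖x - y‖) (x - y) (z + (x - y)))
        (muXYU ν c x y (y - x)) :=
      Paux_integrable_comp _ _ (measurable_add_const (x - y)) _
    rw [hfn, integral_add hint1 hint2,
      integral_sub (integrable_const _) (Paux_integrable _ _ _),
      integral_const, measureReal_def, hcov1, hMeq, smul_eq_mul]
    ring
  have hI2 : (∫ z, (f ‖x + z - (y + z + kap κ (y - x))‖ - f ‖x - y‖
      - (if ‖z‖ ≤ 1 then (deriv f ‖x - y‖ / ‖x - y‖) * ⟪x - y, z⟫ else 0)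
      - (if ‖z + kap κ (y - x)‖ ≤ 1 then
          -((deriv f ‖x - y‖ / ‖x - y‖) * ⟪x - y, z + kap κ (y - x)⟫) else 0))
      ∂(muXYU ν c x y (kap κ (x - y))))
      = (f (2 * ‖x - y‖) - f ‖x - y‖) * ((muXYU ν c x y (x - y)) Set.univ).toReal
        - (∫ z, Paux (deriv f ‖x - y‖ / ‖x - y‖) (x - y) z ∂(muXYU ν c x y (x - y)))
        + (∫ z, Paux (deriv f ‖x - y‖ / ‖x - y‖) (x - y) z ∂(muXYU ν c x y (y - x))) := by
    simp only [hkap1, hkap2]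
    have hfn : (fun z : Ed d => f ‖x + z - (y + z + (y - x))‖ - f ‖x - y‖
        - (if ‖z‖ ≤ 1 then (deriv f ‖x - y‖ / ‖x - y‖) * ⟪x - y, z⟫ else 0)
        - (if ‖z + (y - x)‖ ≤ 1 then
            -((deriv f ‖x - y‖ / ‖x - y‖) * ⟪x - y, z + (y - x)⟫) else 0))
        = fun z : Ed d => ((f (2 * ‖x - y‖) - f ‖x - y‖)
              - Paux (deriv f ‖x - y‖ / ‖x - y‖) (x - y) z)
            + Paux (deriv f ‖x - y‖ / ‖x - y‖) (x - y) (z - (x - y)) := by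
      funext z
      have h0 : x + z - (y + z + (y - x)) = (2 : ℝ) • (x - y) := by
        rw [two_smul]; abel
      have h1 : ‖(2 : ℝ) • (x - y)‖ = 2 * ‖x - y‖ := by
        rw [norm_smul]; simp
      rw [h0, h1, show z + (y - x) = z - (x - y) by abel]
      by_cases h2 : ‖z‖ ≤ 1 <;> by_cases h3 : ‖z - (x - y)‖ ≤ 1 <;>
        simp [Paux, h2, h3] <;> ring
    have hint1 : Integrable (fun z : Ed d =>
        (f (2 * ‖x - y‖) - f ‖x - y‖) - Paux (deriv f ‖x - y‖ / ‖x - y‖) (x - y) z)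
        (muXYU ν c x y (x - y)) :=
      (integrable_const _).sub (Paux_integrable _ _ _)
    have hint2 : Integrable (fun z : Ed d =>
        Paux (deriv f ‖x - y‖ / ‖x - y‖) (x - y) (z - (x - y)))
        (muXYU ν c x y (x - y)) :=
      Paux_integrable_comp _ _ (measurable_id.sub measurable_const) _
    rw [hfn, integral_add hint1 hint2,
      integral_sub (integrable_const _) (Paux_integrable _ _ _),
      integral_const, measureReal_def, hcov2, smul_eq_mul]
    ring
  have hI3 : (∫ z, (f ‖x + z - (y + z)‖ - f ‖x - y‖
      - (if ‖z‖ ≤ 1 then (deriv f ‖x - y‖ / ‖x - y‖) * ⟪x - y, z⟫ else 0)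
      - (if ‖z‖ ≤ 1 then -((deriv f ‖x - y‖ / ‖x - y‖) * ⟪x - y, z⟫) else 0))
      ∂(nuTilde ν c x y - (2⁻¹ : ℝ≥0∞) • muXYU ν c x y (kap κ (x - y))
          - (2⁻¹ : ℝ≥0∞) • muXYU ν c x y (kap κ (y - x)))) = 0 := by
    have hfn : (fun z : Ed d => f ‖x + z - (y + z)‖ - f ‖x - y‖
        - (if ‖z‖ ≤ 1 then (deriv f ‖x - y‖ / ‖x - y‖) * ⟪x - y, z⟫ else 0)
        - (if ‖z‖ ≤ 1 then -((deriv f ‖x - y‖ / ‖x - y‖) * ⟪x - y, z⟫) else 0))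
        = fun _ : Ed d => (0 : ℝ) := by
      funext z
      have h0 : x + z - (y + z) = x - y := by abel
      rw [h0]
      by_cases h1 : ‖z‖ ≤ 1 <;> simp [h1]
    rw [hfn, integral_zero]
  -- concavity: f(2r) ≤ 2 f(r)
  have h2r2 : 2 * ‖x - y‖ ≤ 2 := by linarith
  have hconc : ConcaveOn ℝ (Set.Icc (0 : ℝ) (2 * ‖x - y‖)) f := by
    apply concaveOn_of_deriv2_nonpos (convex_Icc _ _)
    · exact hf_cont.mono (fun t ht => ht.1)
    · rw [interior_Icc]
      exact (hf_smooth.differentiableOn (by norm_num)).mono (fun t ht => ht.1)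
    · rw [interior_Icc]
      have hd1 : ContDiffOn ℝ 1 (deriv f) (Set.Ioi (0 : ℝ)) :=
        hf_smooth.deriv_of_isOpen isOpen_Ioi (by norm_num)
      exact (hd1.differentiableOn one_ne_zero).mono (fun t ht => ht.1)
    · rw [interior_Icc]
      intro t ht
      have h2 : deriv^[2] f t = deriv (deriv f) t := by
        simp [Function.iterate_succ, Function.iterate_zero, Function.comp]
      rw [h2]
      exact hf'' t ht.1 (le_trans ht.2.le h2r2)
  have hkey : f (2 * ‖x - y‖) - 2 * f ‖x - y‖ ≤ 0 := by
    have h0m : (0 : ℝ) ∈ Set.Icc (0 : ℝ) (2 * ‖x - y‖) := ⟨le_refl _, by linarith⟩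
    have h2m : 2 * ‖x - y‖ ∈ Set.Icc (0 : ℝ) (2 * ‖x - y‖) := ⟨by linarith, le_refl _⟩
    have hc2 := hconc.2 h0m h2m (by norm_num : (0:ℝ) ≤ 1/2) (by norm_num : (0:ℝ) ≤ 1/2)
      (by norm_num)
    simp only [smul_eq_mul] at hc2
    rw [hf0] at hc2
    have harg : (1/2 : ℝ) * 0 + (1/2 : ℝ) * (2 * ‖x - y‖) = ‖x - y‖ := by ring
    rw [harg] at hc2
    linarith
  -- J is at most the total mass
  have hJle : Jfun d ν c ‖x - y‖ ≤ ((muXYU ν c x y (x - y)) Set.univ).toReal := by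
    unfold Jfun
    apply csInf_le
    · refine ⟨0, fun m hm => ?_⟩
      obtain ⟨x', y', -, rfl⟩ := hm
      exact ENNReal.toReal_nonneg
    · exact ⟨x, y, rfl, rfl⟩
  have hM0 : (0 : ℝ) ≤ ((muXYU ν c x y (x - y)) Set.univ).toReal := ENNReal.toReal_nonneg
  unfold LCdist
  rw [hI1, hI2, hI3]
  have hmul := mul_le_mul_of_nonpos_right hJle hkey
  linarith

end
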